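/- If T₂ is a well-founded tree and λ : T₁ → T₂ is a finite injury map, then T₁ is well-founded. -/

import Mathlib

/-- Nodes of our trees: finite sequences over the label set `ℕ ∪ {?}`,
with `none` playing the role of `?`. -/
abbrev Node := List (Option ℕ)

/-- A tree is a set of finite sequences closed under initial segments. -/
def IsTree (T : Set Node) : Prop := ∀ x y : Node, x <+: y → y ∈ T → x ∈ T

/-- Strict extension ordering: `y` properly extends `x`. -/
def SPrefix (x y : Node) : Prop := x <+: y ∧ x ≠ y

/-- A tree is well-founded if it has no infinite branch `x₁ ⊊ x₂ ⊊ ⋯`. -/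
def TreeWF (T : Set Node) : Prop :=
  ¬ ∃ f : ℕ → Node, (∀ n, f n ∈ T) ∧ ∀ n, SPrefix (f n) (f (n + 1))

/-- The "injury" alternative: some node `a` followed by `?` in `s` is
corrected to a natural-number label in `t`. -/
def Injury (s t : Node) : Prop :=
  ∃ (a : Node) (u : ℕ), (a ++ [none]) <+: s ∧ (a ++ [some u]) <+: t

/-- `l` is a finite injury map on `T₁`: whenever `x ⊊ y`, either `l x ⊊ l y`,
or some `?`-branch of `l x` is corrected to a numeral branch in `l y`. -/
def FiniteInjury (T₁ : Set Node) (l : Node → Node) : Prop :=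
  ∀ x ∈ T₁, ∀ y ∈ T₁, SPrefix x y → SPrefix (l x) (l y) ∨ Injury (l x) (l y)

/-- `l` is weakly finite injury: whenever `x ⊆ y`, either `l x ⊆ l y` or an
injury occurs, and for every `x` there is an `n` such that any strict chain of
length `n` in `T₁` starting at `x` forces `l` to change value. -/
def WeaklyFiniteInjury (T₁ : Set Node) (l : Node → Node) : Prop :=
  (∀ x ∈ T₁, ∀ y ∈ T₁, x <+: y → l x <+: l y ∨ Injury (l x) (l y)) ∧
  (∀ x ∈ T₁, ∃ n : ℕ, ∀ c : ℕ → Node, c 0 = x → (∀ i, c i ∈ T₁) →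
      (∀ i < n, SPrefix (c i) (c (i + 1))) → l (c 0) ≠ l (c n))

/-!
Let `x₀ ⊊ x₁ ⊊ ⋯` be an infinite branch of `T₁` and `gₙ = λ(xₙ)`. An injury between `gₙ` and
`gₙ₊₁` happens above every common prefix of the two and only turns a `?` into a numeral, while
a proper extension keeps all existing entries. Hence, once the first `k` entries of `gₙ` have
stabilized, the lengths eventually exceed `k` and entry `k` can change at most once more (from `?`
to a numeral), so it stabilizes too. The stable prefixes form an infinite branch of `T₂`.
-/

open Filter

def Advance (s t : Node) : Prop := SPrefix s t ∨ Injury s t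

lemma List.prefix_append_singleton_of_getElem? {α : Type*} {π l : List α} {x : α}
    (hπ : π <+: l) (hx : l[π.length]? = some x) : π ++ [x] <+: l := by
  grind [List.prefix_iff_getElem?]

lemma Filter.eventually_atTop_succ_iff {p : ℕ → Prop} :
    (∀ᶠ n in atTop, p (n + 1)) ↔ ∀ᶠ n in atTop, p n :=
  (eventually_map (P := p)).symm.trans (by rw [map_add_atTop_eq_nat])

lemma exists_eventually_eq_of_eventually_eq_or_eq {α : Type*} {τ : ℕ → α} {c : α}
    (h : ∀ᶠ n in atTop, τ (n + 1) = τ n ∨ τ n = c) : ∃ σ, ∀ᶠ n in atTop, τ n = σ := by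
  obtain ⟨N, hN⟩ := eventually_atTop.1 h
  by_cases hc : ∃ n ≥ N, τ n ≠ c
  · obtain ⟨n, hnN, hn⟩ := hc
    refine ⟨τ n, eventually_atTop.2 ⟨n, fun m hm => ?_⟩⟩
    induction m, hm using Nat.le_induction with
    | base => rfl
    | succ m hm ih => rw [← ih, (hN m (by omega)).resolve_right (ih ▸ hn)]
  · push Not at hc
    exact ⟨c, eventually_atTop.2 ⟨N, hc⟩⟩

lemma Injury.exists_above_prefix {s t π : Node} (h : Injury s t) (hs : π <+: s) (ht : π <+: t) :
    ∃ (a : Node) (u : ℕ), π.length ≤ a.length ∧ a ++ [none] <+: s ∧ a ++ [some u] <+: t := by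
  obtain ⟨a, u, ha, hb⟩ := h
  refine ⟨a, u, ?_, ha, hb⟩
  by_contra! hlt
  have hπa := List.prefix_of_prefix_length_le ha hs (by simp; omega)
  have hπb := List.prefix_of_prefix_length_le hb ht (by simp; omega)
  simpa using List.prefix_of_prefix_length_le hπa hπb (by simp)

namespace Advance

variable {s t π : Node}

lemma length_lt_of_prefix (h : Advance s t) (hs : π <+: s) (ht : π <+: t) :
    π.length < t.length := by
  rcases h with ⟨hst, hne⟩ | hinj
  · exact hs.length_le.trans_lt (hst.length_le.lt_of_ne fun h => hne (hst.eq_of_length h))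
  · obtain ⟨a, u, hπa, -, hb⟩ := hinj.exists_above_prefix hs ht
    have := hb.length_le
    simp only [List.length_append, List.length_singleton] at this
    omega

lemma getElem?_eq_or (h : Advance s t) (hs : π <+: s) (ht : π <+: t) (hlen : π.length < s.length) :
    t[π.length]? = s[π.length]? ∨ s[π.length]? = some none := by
  rcases h with ⟨hst, -⟩ | hinj
  · exact Or.inl (by rw [List.prefix_iff_getElem?.1 hst _ hlen, List.getElem?_eq_getElem hlen])
  · obtain ⟨a, u, hπa, ha, hb⟩ := hinj.exists_above_prefix hs ht
    rw [List.prefix_iff_getElem?] at ha hb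
    rcases hπa.lt_or_eq with hlt | heq
    · left
      rw [hb _ (by simp; omega), ha _ (by simp; omega)]
      simp [List.getElem_append_left hlt]
    · right
      simpa [heq] using ha a.length (by simp)

end Advance

section Chain

variable {g : ℕ → Node} (hg : ∀ n, Advance (g n) (g (n + 1)))
include hg

lemma exists_eventually_prefix_append_singleton {π : Node} (hπ : ∀ᶠ n in atTop, π <+: g n) :
    ∃ x, ∀ᶠ n in atTop, π ++ [x] <+: g n := by
  have hπ₁ : ∀ᶠ n in atTop, π <+: g (n + 1) := eventually_atTop_succ_iff.2 hπ
  have hlong : ∀ᶠ n in atTop, π.length < (g n).length :=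
    eventually_atTop_succ_iff.1 <| (hπ.and hπ₁).mono fun n h => (hg n).length_lt_of_prefix h.1 h.2
  have hstep : ∀ᶠ n in atTop,
      (g (n + 1))[π.length]? = (g n)[π.length]? ∨ (g n)[π.length]? = some none :=
    ((hπ.and hπ₁).and hlong).mono fun n h => (hg n).getElem?_eq_or h.1.1 h.1.2 h.2
  obtain ⟨e, he⟩ :=
    exists_eventually_eq_of_eventually_eq_or_eq (τ := fun n => (g n)[π.length]?) hstep
  obtain ⟨n, hne, hnlong⟩ := (he.and hlong).exists
  refine ⟨(g n)[π.length], (he.and hπ).mono fun m hm => ?_⟩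
  exact List.prefix_append_singleton_of_getElem? hm.2
    (by rw [hm.1, ← hne, List.getElem?_eq_getElem])

lemma exists_eventually_prefix (k : ℕ) :
    ∃ π : Node, π.length = k ∧ ∀ᶠ n in atTop, π <+: g n := by
  induction k with
  | zero => exact ⟨[], rfl, Eventually.of_forall fun _ => List.nil_prefix⟩
  | succ k ih =>
    obtain ⟨π, rfl, hπ⟩ := ih
    obtain ⟨x, hx⟩ := exists_eventually_prefix_append_singleton hg hπ
    exact ⟨π ++ [x], by simp, hx⟩

end Chain

lemma not_treeWF_of_eventually_prefix {T : Set Node} (hT : IsTree T) {g : ℕ → Node}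
    (hgT : ∀ n, g n ∈ T) (h : ∀ k, ∃ π : Node, π.length = k ∧ ∀ᶠ n in atTop, π <+: g n) :
    ¬ TreeWF T := by
  choose π hlen hπ using h
  refine fun hwf => hwf ⟨π, fun k => ?_, fun k => ⟨?_, fun h => ?_⟩⟩
  · obtain ⟨n, hn⟩ := (hπ k).exists
    exact hT _ _ hn (hgT n)
  · obtain ⟨n, h₁, h₂⟩ := ((hπ k).and (hπ (k + 1))).exists
    exact List.prefix_of_prefix_length_le h₁ h₂ (by simp [hlen])
  · simpa [hlen] using congrArg List.length h

theorem stmt1_general (T₁ T₂ : Set Node) (hT₂ : IsTree T₂)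
    (l : Node → Node) (hmap : ∀ x ∈ T₁, l x ∈ T₂)
    (hwf : TreeWF T₂) (hfi : FiniteInjury T₁ l) :
    TreeWF T₁ := by
  rintro ⟨f, hfT, hchain⟩
  have hadv : ∀ n, Advance (l (f n)) (l (f (n + 1))) :=
    fun n => hfi _ (hfT n) _ (hfT (n + 1)) (hchain n)
  exact not_treeWF_of_eventually_prefix hT₂ (fun n => hmap _ (hfT n))
    (exists_eventually_prefix hadv) hwf

/-- If `T₂` is a well-founded tree and `l : T₁ → T₂` is a finite injury map,
then `T₁` is well-founded. -/
theorem stmt1 (T₁ T₂ : Set Node) (hT₁ : IsTree T₁) (hT₂ : IsTree T₂)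
    (l : Node → Node) (hmap : ∀ x ∈ T₁, l x ∈ T₂)
    (hwf : TreeWF T₂) (hfi : FiniteInjury T₁ l) :
    TreeWF T₁ :=
  stmt1_general T₁ T₂ hT₂ l hmap hwf hfi
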